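/- Let q be an odd prime power and let μ' ∈ F_q be nonzero. Then the homogeneous quartic polynomial F'(X,Y,Z) = X²Y² − μ'Z²(X² + Y²) is absolutely irreducible, i.e., irreducible as a polynomial over the algebraic closure of F_q. -/

import Mathlib

/-!
Over an algebraically closed field of characteristic `≠ 2` write `μ' = s²`. As a quadratic in
`X` over `R = K[Y, Z]` (through `finSuccEquiv`, so `Y, Z` become `X 0, X 1`) the quartic is `a X² − w²` with `a = Y² − s²Z² = (Y − sZ)(Y + sZ)` and
`w = sYZ`. Since `a` and `w²` are coprime, Gauss's lemma reduces irreducibility to the absence of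
a root `z` in `Frac R`. Such a root would make `a = (w / z)²` a square in `Frac R`, hence in the
integrally closed ring `R`; but `a` is a squarefree non-unit, its two linear factors being
non-associate because `2 ≠ 0`.
-/

noncomputable section

open MvPolynomial

/-- The quartic curve `F'(X,Y,Z) = X²Y² − μ'Z²(X² + Y²)`. -/
def quarticF' {K : Type*} [Field K] (μ' : K) : MvPolynomial (Fin 3) K :=
  X 0 ^ 2 * X 1 ^ 2 - C μ' * X 2 ^ 2 * (X 0 ^ 2 + X 1 ^ 2)

theorem Squarefree.not_isSquare {M : Type*} [CommMonoid M] {a : M} (hsq : Squarefree a)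
    (ha : ¬IsUnit a) : ¬IsSquare a := by
  rintro ⟨y, rfl⟩
  exact ha ((hsq y dvd_rfl).mul (hsq y dvd_rfl))

theorem IsIntegrallyClosed.isSquare_of_isSquare_algebraMap {R K : Type*} [CommRing R]
    [Field K] [Algebra R K] [IsFractionRing R K] [IsIntegrallyClosed R] {a : R}
    (h : IsSquare (algebraMap R K a)) : IsSquare a := by
  obtain ⟨x, hx⟩ := h
  obtain ⟨y, rfl⟩ := IsIntegrallyClosed.exists_algebraMap_eq_of_isIntegral_pow (R := R)
    (x := x) two_pos (by rw [sq, ← hx]; exact isIntegral_algebraMap)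
  exact ⟨y, IsFractionRing.injective R K (by rw [hx, map_mul])⟩

namespace Polynomial

theorem isPrimitive_C_mul_X_sq_sub_C {R : Type*} [CommRing R] {a b : R} (h : IsRelPrime a b) :
    (C a * X ^ 2 - C b).IsPrimitive := fun r hr => by
  rw [C_dvd_iff_dvd_coeff] at hr
  exact h (by simpa using hr 2) (by simpa using hr 0)

theorem irreducible_C_mul_X_sq_sub_C_sq {L : Type*} [Field L] {a w : L} (ha : ¬IsSquare a)
    (hw : w ≠ 0) : Irreducible (C a * X ^ 2 - C (w ^ 2)) := by
  have ha0 : a ≠ 0 := by rintro rfl; exact ha ⟨0, (mul_zero 0).symm⟩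
  have hdeg : (C a * X ^ 2 - C (w ^ 2)).natDegree = 2 := by compute_degree!
  rw [irreducible_iff_roots_eq_zero_of_degree_le_three hdeg.ge (hdeg.trans_le (by norm_num)),
    Multiset.eq_zero_iff_forall_notMem]
  intro z hz
  have hroot : a * z ^ 2 = w ^ 2 := by simpa [sub_eq_zero] using (mem_roots'.mp hz).2
  have hz0 : z ≠ 0 := by rintro rfl; exact hw (by simpa using hroot.symm)
  exact ha ⟨w / z, by field_simp; linear_combination hroot⟩

theorem IsPrimitive.irreducible_C_mul_X_sq_sub_C_sq {R : Type*} [CommRing R] [IsDomain R]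
    [IsGCDMonoid R] {a w : R} (hp : (C a * X ^ 2 - C (w ^ 2)).IsPrimitive) (ha : ¬IsSquare a)
    (hw : w ≠ 0) : Irreducible (C a * X ^ 2 - C (w ^ 2)) := by
  let K := FractionRing R
  rw [hp.irreducible_iff_irreducible_map_fraction_map (K := K)]
  simpa using Polynomial.irreducible_C_mul_X_sq_sub_C_sq
    (mt IsIntegrallyClosed.isSquare_of_isSquare_algebraMap ha)
    ((map_ne_zero_iff _ (IsFractionRing.injective R K)).mpr hw)

end Polynomial

namespace MvPolynomial

theorem finSuccEquiv_C {R : Type*} [CommSemiring R] {n : ℕ} (c : R) :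
    finSuccEquiv R n (C c) = Polynomial.C (C c) :=
  (finSuccEquiv R n).commutes c

theorem prime_X_zero_sub_C_mul_X_succ {R : Type*} [CommRing R] [IsDomain R] {n : ℕ} (c : R)
    (i : Fin n) : Prime (X 0 - C c * X i.succ : MvPolynomial (Fin (n + 1)) R) := by
  rw [← MulEquiv.prime_iff (finSuccEquiv R n).toMulEquiv]
  convert Polynomial.prime_X_sub_C (C c * X i)
  simp [finSuccEquiv_C, finSuccEquiv_X_zero, finSuccEquiv_X_succ]

theorem isRelPrime_of_eval {σ R : Type*} [CommRing R] {p q : MvPolynomial σ R}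
    (hp : Irreducible p) (v : σ → R) (hpv : eval v p = 0) (hqv : eval v q ≠ 0) :
    IsRelPrime p q :=
  hp.isRelPrime_iff_not_dvd.mpr fun ⟨c, hc⟩ => hqv (by rw [hc, map_mul, hpv, zero_mul])

end MvPolynomial

section Quartic

variable {K : Type*} [Field K]

theorem finSuccEquiv_quarticF'_sq (s : K) : finSuccEquiv K 2 (quarticF' (s ^ 2)) =
    Polynomial.C (X 0 ^ 2 - C (s ^ 2) * X 1 ^ 2) * Polynomial.X ^ 2
      - Polynomial.C ((C s * X 0 * X 1) ^ 2) := by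
  have h1 : (X 1 : MvPolynomial (Fin 3) K) = X (Fin.succ 0) := rfl
  have h2 : (X 2 : MvPolynomial (Fin 3) K) = X (Fin.succ 1) := rfl
  simp only [quarticF', h1, h2, map_sub, map_mul, map_add, map_pow, finSuccEquiv_X_zero,
    finSuccEquiv_X_succ, finSuccEquiv_C]
  ring

theorem squarefree_X_zero_sq_sub_C_sq_mul_X_one_sq (h2 : (2 : K) ≠ 0) {s : K} (hs : s ≠ 0) :
    Squarefree (X 0 ^ 2 - C (s ^ 2) * X 1 ^ 2 : MvPolynomial (Fin 2) K) := by
  have hfactor : (X 0 ^ 2 - C (s ^ 2) * X 1 ^ 2 : MvPolynomial (Fin 2) K)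
      = (X 0 - C s * X 1) * (X 0 - C (-s) * X 1) := by
    simp only [map_pow, map_neg]; ring
  have hp₁ : Prime (X 0 - C s * X 1 : MvPolynomial (Fin 2) K) := prime_X_zero_sub_C_mul_X_succ s 0
  have hp₂ : Prime (X 0 - C (-s) * X 1 : MvPolynomial (Fin 2) K) :=
    prime_X_zero_sub_C_mul_X_succ (-s) 0
  rw [hfactor, squarefree_mul_iff]
  refine ⟨isRelPrime_of_eval hp₁.irreducible ![s, 1] (by simp) ?_, hp₁.squarefree, hp₂.squarefree⟩
  simpa [← two_mul] using mul_ne_zero h2 hs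

theorem isRelPrime_X_zero_sq_sub_C_sq_mul_X_one_sq {s : K} (hs : s ≠ 0) :
    IsRelPrime (X 0 ^ 2 - C (s ^ 2) * X 1 ^ 2 : MvPolynomial (Fin 2) K)
      ((C s * X 0 * X 1) ^ 2) := by
  refine IsRelPrime.pow_right (IsRelPrime.mul_right (IsRelPrime.mul_right ?_ ?_) ?_)
  · exact ((isUnit_iff_ne_zero.mpr hs).map C).isRelPrime_right
  · exact (isRelPrime_of_eval X_prime.irreducible ![0, 1] (by simp) (by simpa using hs)).symm
  · exact (isRelPrime_of_eval X_prime.irreducible ![1, 0] (by simp) (by simp)).symm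

theorem irreducible_quarticF'_sq (h2 : (2 : K) ≠ 0) {s : K} (hs : s ≠ 0) :
    Irreducible (quarticF' (s ^ 2)) := by
  rw [← MulEquiv.irreducible_iff (finSuccEquiv K 2).toMulEquiv]
  change Irreducible (finSuccEquiv K 2 (quarticF' (s ^ 2)))
  rw [finSuccEquiv_quarticF'_sq]
  refine Polynomial.IsPrimitive.irreducible_C_mul_X_sq_sub_C_sq
    (Polynomial.isPrimitive_C_mul_X_sq_sub_C (isRelPrime_X_zero_sq_sub_C_sq_mul_X_one_sq hs))
    ((squarefree_X_zero_sq_sub_C_sq_mul_X_one_sq h2 hs).not_isSquare fun hu => ?_) (by simp [hs])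
  simpa using hu.map (eval 0 : MvPolynomial (Fin 2) K →+* K)

end Quartic

/-- for `q` odd and `μ' ≠ 0`, the quartic `X²Y² − μ'Z²(X² + Y²)` is
absolutely irreducible. -/
theorem stmt14 (F : Type*) [Field F] [Fintype F] (hodd : Odd (Fintype.card F))
    (μ' : F) (hμ' : μ' ≠ 0) :
    Irreducible (MvPolynomial.map (algebraMap F (AlgebraicClosure F)) (quarticF' μ')) := by
  have h2 : (2 : F) ≠ 0 := Ring.two_ne_zero fun h => by
    have := FiniteField.even_card_iff_char_two.mp h
    rw [Nat.odd_iff] at hodd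
    omega
  obtain ⟨s, hs⟩ := IsAlgClosed.exists_pow_nat_eq (algebraMap F (AlgebraicClosure F) μ') two_pos
  have hmap : MvPolynomial.map (algebraMap F (AlgebraicClosure F)) (quarticF' μ')
      = quarticF' (s ^ 2) := by
    simp [quarticF', hs]
  rw [hmap]
  refine irreducible_quarticF'_sq ?_ ?_
  · rw [← map_ofNat (algebraMap F (AlgebraicClosure F)) 2]
    exact (map_ne_zero _).mpr h2
  · rintro rfl
    exact hμ' (by simpa using hs.symm)
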